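/- Let k*_0 = k_0, k*_{t+1} = g(k*_t, 0), let k* := lim_{t→∞} k*_t ∈ [0,∞) (this limit exists), and let R* := f'(k*) (with R* := ∞ when k* = 0). If either ∑_{t=1}^∞ d_t = ∞ or R* > G, then there exists exactly one equilibrium, and it is bubbleless. -/

import Mathlib

open Filter Topology Set

noncomputable section

/-- Standing assumptions on the production function `f` with derivative `f'` and
second derivative `f''`: `f : (0,∞) → (0,∞)` is twice continuously differentiable,
`f' > 0`, `f'' < 0`, `f'(k) → ∞` as `k → 0+`, and `lim_{k→∞} f'(k) < G`. -/
def ProdAssump (G : ℝ) (f f' f'' : ℝ → ℝ) : Prop :=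
  0 < G ∧
  (∀ k > (0:ℝ), 0 < f k) ∧
  (∀ k > (0:ℝ), HasDerivAt f (f' k) k) ∧
  (∀ k > (0:ℝ), HasDerivAt f' (f'' k) k) ∧
  ContinuousOn f'' (Ioi 0) ∧
  (∀ k > (0:ℝ), 0 < f' k) ∧
  (∀ k > (0:ℝ), f'' k < 0) ∧
  Tendsto f' (nhdsWithin 0 (Ioi 0)) atTop ∧
  (∃ L < G, Tendsto f' atTop (nhds L))

/-- Standing assumptions on the savings function: continuous, `0 < s(w,R) < w`,
strictly increasing in `w`, nondecreasing in `R`. -/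
def SavAssump (s : ℝ → ℝ → ℝ) : Prop :=
  ContinuousOn (fun wR : ℝ × ℝ => s wR.1 wR.2) (Ioi 0 ×ˢ Ioi 0) ∧
  (∀ w > (0:ℝ), ∀ R > (0:ℝ), 0 < s w R ∧ s w R < w) ∧
  (∀ R > (0:ℝ), StrictMonoOn (fun w => s w R) (Ioi 0)) ∧
  (∀ w > (0:ℝ), MonotoneOn (fun R => s w R) (Ioi 0))

/-- The savings function arises from a continuous, quasi-concave, strictly increasing
utility `U` on `(0,∞)²`: `s w R` is the unique maximizer of `σ ↦ U (w - σ) (R σ)`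
over `(0, w)`. -/
def SavFromUtility (s : ℝ → ℝ → ℝ) : Prop :=
  ∃ U : ℝ → ℝ → ℝ,
    ContinuousOn (fun c : ℝ × ℝ => U c.1 c.2) (Ioi 0 ×ˢ Ioi 0) ∧
    QuasiconcaveOn ℝ (Ioi 0 ×ˢ Ioi 0) (fun c : ℝ × ℝ => U c.1 c.2) ∧
    (∀ c c' : ℝ × ℝ, c ∈ Ioi (0:ℝ) ×ˢ Ioi (0:ℝ) → c' ∈ Ioi (0:ℝ) ×ˢ Ioi (0:ℝ) →
      c.1 ≤ c'.1 → c.2 ≤ c'.2 → c ≠ c' → U c.1 c.2 < U c'.1 c'.2) ∧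
    (∀ w > (0:ℝ), ∀ R > (0:ℝ), s w R ∈ Ioo 0 w ∧
      ∀ σ ∈ Ioo (0:ℝ) w, σ ≠ s w R → U (w - σ) (R * σ) < U (w - s w R) (R * s w R))

/-- An equilibrium: sequences `k, p` with `k t > 0`, `p t ≥ 0`, `k 0 = k₀`,
the capital accumulation equation and the no-arbitrage price equation. -/
def IsEquilibrium (G : ℝ) (f f' : ℝ → ℝ) (s : ℝ → ℝ → ℝ) (k0 : ℝ) (d : ℕ → ℝ)
    (k p : ℕ → ℝ) : Prop :=
  (∀ t, 0 < k t) ∧ (∀ t, 0 ≤ p t) ∧ k 0 = k0 ∧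
  (∀ t, G * k (t + 1) + p t = s (f (k t) - k t * f' (k t)) (f' (k (t + 1)))) ∧
  (∀ t, p (t + 1) = f' (k (t + 1)) / G * p t - d (t + 1))

/-- Arrow–Debreu date-0 price `q_t = 1/(R_1 ⋯ R_t)` where `R_t = f'(k_t)`. -/
def qseq (f' : ℝ → ℝ) (k : ℕ → ℝ) (t : ℕ) : ℝ :=
  (∏ i ∈ Finset.range t, f' (k (i + 1)))⁻¹

/-- Undetrended dividend `D_t = G^t d_t`. -/
def Dseq (G : ℝ) (d : ℕ → ℝ) (t : ℕ) : ℝ := G ^ t * d t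

/-- Detrended fundamental value `v_t = G^{-t} q_t^{-1} ∑_{s>t} q_s D_s`. -/
def fundval (G : ℝ) (f' : ℝ → ℝ) (k : ℕ → ℝ) (d : ℕ → ℝ) (t : ℕ) : ℝ :=
  (G ^ t)⁻¹ * (qseq f' k t)⁻¹ * ∑' n : ℕ, qseq f' k (t + 1 + n) * Dseq G d (t + 1 + n)

/-- Detrended bubble component `b_t = p_t - v_t`. -/
def bubble (G : ℝ) (f' : ℝ → ℝ) (k p : ℕ → ℝ) (d : ℕ → ℝ) (t : ℕ) : ℝ :=
  p t - fundval G f' k d t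

/-- An equilibrium is bubbleless if `b_t = 0` for all `t`. -/
def Bubbleless (G : ℝ) (f' : ℝ → ℝ) (k p : ℕ → ℝ) (d : ℕ → ℝ) : Prop :=
  ∀ t, bubble G f' k p d t = 0

/-- An equilibrium is asymptotically bubbly if `liminf_{t→∞} b_t > 0`. -/
def AsympBubbly (G : ℝ) (f' : ℝ → ℝ) (k p : ℕ → ℝ) (d : ℕ → ℝ) : Prop :=
  0 < atTop.liminf (bubble G f' k p d)

/-- Long-run dividend growth rate `G_d = limsup_{t→∞} D_t^{1/t}` (as an extended real). -/
def GdGrowth (G : ℝ) (d : ℕ → ℝ) : EReal :=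
  atTop.limsup (fun t : ℕ => ((Dseq G d t ^ ((t : ℝ)⁻¹) : ℝ) : EReal))

/-- `x` solves the equation `G x + p = s(f(k) - k f'(k), f'(x))` with `x > 0`;
when the solution exists it is unique and denoted `g(k,p)`. -/
def IsGsol (G : ℝ) (f f' : ℝ → ℝ) (s : ℝ → ℝ → ℝ) (k p x : ℝ) : Prop :=
  0 < x ∧ G * x + p = s (f k - k * f' k) (f' x)

/-- Set of positive steady states: `𝒦 = {k > 0 : g(k,0) = k}`. -/
def Ksteady (G : ℝ) (f f' : ℝ → ℝ) (s : ℝ → ℝ → ℝ) : Set ℝ :=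
  {k : ℝ | 0 < k ∧ IsGsol G f f' s k 0 k}

/-- The equilibrium set `𝒫₀` of initial prices. -/
def P0set (G : ℝ) (f f' : ℝ → ℝ) (s : ℝ → ℝ → ℝ) (k0 : ℝ) (d : ℕ → ℝ) : Set ℝ :=
  {p0 : ℝ | ∃ k p : ℕ → ℝ, IsEquilibrium G f f' s k0 d k p ∧ p 0 = p0}


/-!
For given capital `k` and asset price `p`, the equation `G x + p = s(w(k), f'(x))` has at most one
solution `x`, which is larger when `k` is larger or `p` is smaller. Of two paths from `k₀`, the one
with the higher initial price therefore has less capital and higher interest rates `R_t`, and its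
price lead, discounted by `Γ_t = G^t / (R_1 ⋯ R_t)`, never shrinks: `Γ_t (p'_t - p_t) ≥ p'_0 - p_0`.
Capital, hence prices, are bounded, so two equilibria would keep `Γ_t` away from `0`; so would a
bubble, since `Γ_t p_t ≥ p_0 - ∑ Γ_s d_s`. This is impossible if `∑ d_t = ∞`, because
`∑ Γ_t d_t ≤ p_0`, and if `R* > G`, because `k_t ≤ k*_t` gives `R_t ≥ f'(k*_t)`, eventually above
some `ρ > G`, so that `Γ_t → 0`.

Existence is by shooting on `p_0`. The intermediate value theorem gives, for every `T`, an initial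
price whose path has nonnegative prices up to `T` and `p_T = 0`, and Cantor's intersection theorem
a limit of such prices whose path is defined forever: the path from a limit of initial prices can
only break down where prices blow up.
-/

section Production

variable {G : ℝ} {f f' f'' : ℝ → ℝ} {a b k : ℝ}

lemma ProdAssump.G_pos (hf : ProdAssump G f f' f'') : 0 < G := hf.1

lemma ProdAssump.hasDerivAt (hf : ProdAssump G f f' f'') (hk : 0 < k) :
    HasDerivAt f (f' k) k :=
  hf.2.2.1 k hk

lemma ProdAssump.f'_pos (hf : ProdAssump G f f' f'') (hk : 0 < k) : 0 < f' k :=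
  hf.2.2.2.2.2.1 k hk

lemma ProdAssump.continuousAt_f' (hf : ProdAssump G f f' f'') (hk : 0 < k) :
    ContinuousAt f' k :=
  (hf.2.2.2.1 k hk).continuousAt

lemma ProdAssump.tendsto_f'_zero (hf : ProdAssump G f f' f'') :
    Tendsto f' (𝓝[>] 0) atTop :=
  hf.2.2.2.2.2.2.2.1

lemma ProdAssump.f'_strictAntiOn (hf : ProdAssump G f f' f'') : StrictAntiOn f' (Ioi 0) := by
  refine strictAntiOn_of_deriv_neg (convex_Ioi 0)
    (fun k hk => (hf.continuousAt_f' hk).continuousWithinAt) fun k hk => ?_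
  rw [interior_Ioi] at hk
  rw [(hf.2.2.2.1 k hk).deriv]
  exact hf.2.2.2.2.2.2.1 k hk

lemma ProdAssump.f'_le_of_le (hf : ProdAssump G f f' f'') (ha : 0 < a) (hab : a ≤ b) :
    f' b ≤ f' a :=
  hf.f'_strictAntiOn.antitoneOn ha (ha.trans_le hab) hab

lemma ProdAssump.concaveOn (hf : ProdAssump G f f' f'') : ConcaveOn ℝ (Ioi 0) f := by
  refine (StrictAntiOn.strictConcaveOn_of_deriv (convex_Ioi 0)
    (fun k hk => (hf.hasDerivAt hk).continuousAt.continuousWithinAt) ?_).concaveOn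
  rw [interior_Ioi]
  exact hf.f'_strictAntiOn.congr fun k hk => (hf.hasDerivAt hk).deriv.symm

lemma ProdAssump.le_tangent (hf : ProdAssump G f f' f'') (ha : 0 < a) (hb : 0 < b) :
    f b ≤ f a + f' a * (b - a) := by
  rcases lt_trichotomy a b with h | rfl | h
  · have := hf.concaveOn.slope_le_of_hasDerivAt ha hb h (hf.hasDerivAt ha)
    rw [slope_def_field, div_le_iff₀ (sub_pos.2 h)] at this
    linarith
  · simp
  · have := hf.concaveOn.le_slope_of_hasDerivAt hb ha h (hf.hasDerivAt ha)
    rw [slope_def_field, le_div_iff₀ (sub_pos.2 h)] at this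
    linarith

def wage (f f' : ℝ → ℝ) (k : ℝ) : ℝ := f k - k * f' k

lemma ProdAssump.continuousAt_wage (hf : ProdAssump G f f' f'') (hk : 0 < k) :
    ContinuousAt (wage f f') k :=
  (hf.hasDerivAt hk).continuousAt.sub (continuousAt_id.mul (hf.continuousAt_f' hk))

lemma ProdAssump.wage_strictMonoOn (hf : ProdAssump G f f' f'') :
    StrictMonoOn (wage f f') (Ioi 0) := by
  intro a ha b hb hab
  have htan := hf.le_tangent hb ha
  have hf' := mul_lt_mul_of_pos_left (hf.f'_strictAntiOn ha hb hab) (show 0 < a from ha)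
  simp only [wage]
  linarith

lemma ProdAssump.wage_le_of_le (hf : ProdAssump G f f' f'') (ha : 0 < a) (hab : a ≤ b) :
    wage f f' a ≤ wage f f' b :=
  hf.wage_strictMonoOn.monotoneOn ha (ha.trans_le hab) hab

lemma ProdAssump.wage_pos (hf : ProdAssump G f f' f'') (hk : 0 < k) : 0 < wage f f' k := by
  -- `f k ≥ f ε + f' k (k - ε) > f' k (k - ε)` for small `ε > 0`; let `ε → 0`.
  have hle : ∀ k > 0, k * f' k ≤ f k := by
    intro k hk
    have hlim : Tendsto (fun ε => f' k * (k - ε)) (𝓝[>] 0) (𝓝 (f' k * (k - 0))) :=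
      ((continuous_const.mul (continuous_const.sub continuous_id)).tendsto 0).mono_left
        nhdsWithin_le_nhds
    refine le_of_tendsto (by simpa [mul_comm] using hlim) ?_
    filter_upwards [Ioo_mem_nhdsGT hk] with ε hε
    linarith [hf.le_tangent hk hε.1, hf.2.1 ε hε.1]
  have := hf.wage_strictMonoOn (half_pos hk) hk (half_lt_self hk)
  have := hle (k / 2) (half_pos hk)
  simp only [wage] at *
  linarith

end Production

section Savings

variable {s : ℝ → ℝ → ℝ} {w w' R R' : ℝ}

lemma SavAssump.pos (hs : SavAssump s) (hw : 0 < w) (hR : 0 < R) : 0 < s w R :=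
  (hs.2.1 w hw R hR).1

lemma SavAssump.lt (hs : SavAssump s) (hw : 0 < w) (hR : 0 < R) : s w R < w :=
  (hs.2.1 w hw R hR).2

lemma SavAssump.mono_left (hs : SavAssump s) (hw : 0 < w) (hww' : w ≤ w') (hR : 0 < R) :
    s w R ≤ s w' R :=
  (hs.2.2.1 R hR).monotoneOn hw (hw.trans_le hww') hww'

lemma SavAssump.mono_right (hs : SavAssump s) (hw : 0 < w) (hR : 0 < R) (hRR' : R ≤ R') :
    s w R ≤ s w R' :=
  hs.2.2.2 w hw hR (hR.trans_le hRR') hRR'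

lemma SavAssump.continuousAt (hs : SavAssump s) (hw : 0 < w) (hR : 0 < R) :
    ContinuousAt (fun q : ℝ × ℝ => s q.1 q.2) (w, R) :=
  hs.1.continuousAt ((isOpen_Ioi.prod isOpen_Ioi).mem_nhds ⟨hw, hR⟩)

end Savings

section Solution

variable {G : ℝ} {f f' f'' : ℝ → ℝ} {s : ℝ → ℝ → ℝ} {k k' p p' x x' : ℝ}

def assetDemand (G : ℝ) (f f' : ℝ → ℝ) (s : ℝ → ℝ → ℝ) (k x : ℝ) : ℝ :=
  s (wage f f' k) (f' x) - G * x

lemma isGsol_iff : IsGsol G f f' s k p x ↔ 0 < x ∧ assetDemand G f f' s k x = p := by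
  unfold IsGsol assetDemand wage
  constructor <;> rintro ⟨hx, h⟩ <;> exact ⟨hx, by linarith⟩

lemma assetDemand_strictAntiOn (hf : ProdAssump G f f' f'') (hs : SavAssump s) (hk : 0 < k) :
    StrictAntiOn (assetDemand G f f' s k) (Ioi 0) := by
  intro x hx y hy hxy
  have := hs.mono_right (hf.wage_pos hk) (hf.f'_pos hy) (hf.f'_strictAntiOn hx hy hxy).le
  have := mul_lt_mul_of_pos_left hxy hf.G_pos
  simp only [assetDemand]
  linarith

lemma assetDemand_le_of_le (hf : ProdAssump G f f' f'') (hs : SavAssump s) (hk : 0 < k)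
    (hkk' : k ≤ k') (hx : 0 < x) : assetDemand G f f' s k x ≤ assetDemand G f f' s k' x := by
  have := hs.mono_left (hf.wage_pos hk) (hf.wage_le_of_le hk hkk') (hf.f'_pos hx)
  simp only [assetDemand]
  linarith

lemma continuousAt_assetDemand (hf : ProdAssump G f f' f'') (hs : SavAssump s) (hk : 0 < k)
    (hx : 0 < x) :
    ContinuousAt (fun q : ℝ × ℝ => assetDemand G f f' s q.1 q.2) (k, x) := by
  have hw : ContinuousAt (fun q : ℝ × ℝ => wage f f' q.1) (k, x) :=
    ContinuousAt.comp (g := wage f f') (hf.continuousAt_wage hk) continuousAt_fst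
  have hR : ContinuousAt (fun q : ℝ × ℝ => f' q.2) (k, x) :=
    ContinuousAt.comp (g := f') (hf.continuousAt_f' hx) continuousAt_snd
  exact ((hs.continuousAt (hf.wage_pos hk) (hf.f'_pos hx)).comp₂ hw hR).sub
    (continuousAt_const.mul continuousAt_snd)

lemma continuousOn_assetDemand (hf : ProdAssump G f f' f'') (hs : SavAssump s) (hk : 0 < k) :
    ContinuousOn (assetDemand G f f' s k) (Ioi 0) := fun _ hx =>
  ((continuousAt_assetDemand hf hs hk hx).comp₂ continuousAt_const
    continuousAt_id).continuousWithinAt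

lemma IsGsol.add_lt_wage (hf : ProdAssump G f f' f'') (hs : SavAssump s) (hk : 0 < k)
    (hx : IsGsol G f f' s k p x) : G * x + p < wage f f' k :=
  hx.2.trans_lt (hs.lt (hf.wage_pos hk) (hf.f'_pos hx.1))

lemma IsGsol.unique (hf : ProdAssump G f f' f'') (hs : SavAssump s) (hk : 0 < k)
    (hx : IsGsol G f f' s k p x) (hx' : IsGsol G f f' s k p x') : x = x' := by
  rw [isGsol_iff] at hx hx'
  exact (assetDemand_strictAntiOn hf hs hk).injOn hx.1 hx'.1 (hx.2.trans hx'.2.symm)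

lemma IsGsol.le_of_le_of_le (hf : ProdAssump G f f' f'') (hs : SavAssump s) (hk : 0 < k)
    (hkk' : k ≤ k') (hpp' : p' ≤ p) (hx : IsGsol G f f' s k p x)
    (hx' : IsGsol G f f' s k' p' x') : x ≤ x' := by
  rw [isGsol_iff] at hx hx'
  by_contra! hlt
  have := assetDemand_strictAntiOn hf hs (hk.trans_le hkk') hx'.1 hx.1 hlt
  have := assetDemand_le_of_le hf hs hk hkk' hx.1
  linarith

lemma exists_isGsol_of_nonpos (hf : ProdAssump G f f' f'') (hs : SavAssump s) (hk : 0 < k)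
    (hp : p ≤ 0) : ∃ x, IsGsol G f f' s k p x := by
  have hG := hf.G_pos
  set S := s (wage f f' k) (f' 1)
  have hS : 0 < S := hs.pos (hf.wage_pos hk) (hf.f'_pos one_pos)
  set x₀ := min 1 (S / (2 * G))
  have hx₀ : 0 < x₀ := by positivity
  have hleft : p ≤ assetDemand G f f' s k x₀ := by
    have := hs.mono_right (hf.wage_pos hk) (hf.f'_pos one_pos)
      (hf.f'_le_of_le hx₀ (min_le_left _ _))
    have := (le_div_iff₀ (by positivity)).1 (min_le_right 1 (S / (2 * G)))
    simp only [assetDemand]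
    nlinarith
  set X := max x₀ ((wage f f' k - p) / G)
  have hright : assetDemand G f f' s k X ≤ p := by
    have := hs.lt (hf.wage_pos hk) (hf.f'_pos (show 0 < X from hx₀.trans_le (le_max_left _ _)))
    have := (div_le_iff₀ hG).1 (le_max_right x₀ ((wage f f' k - p) / G))
    simp only [assetDemand]
    linarith
  obtain ⟨x, hx, hxp⟩ := intermediate_value_Icc' (le_max_left x₀ _)
    ((continuousOn_assetDemand hf hs hk).mono fun y hy => hx₀.trans_le hy.1) ⟨hright, hleft⟩
  exact ⟨x, isGsol_iff.2 ⟨hx₀.trans_le hx.1, hxp⟩⟩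

lemma IsGsol.eventually_exists_near (hf : ProdAssump G f f' f'') (hs : SavAssump s) (hk : 0 < k)
    (hx : IsGsol G f f' s k p x) {ε : ℝ} (hε : 0 < ε) (hεx : ε < x) :
    ∀ᶠ q in 𝓝 (k, p), ∃ y, IsGsol G f f' s q.1 q.2 y ∧ |y - x| ≤ ε := by
  obtain ⟨hx0, hxp⟩ := isGsol_iff.1 hx
  have hl : 0 < x - ε := by linarith
  have hD := assetDemand_strictAntiOn hf hs hk
  have hcont : ∀ {y}, 0 < y → ContinuousAt (fun q : ℝ × ℝ => assetDemand G f f' s q.1 y) (k, p) :=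
    fun hy => (continuousAt_assetDemand hf hs hk hy).comp₂ (continuousAt_fst (p := (k, p)))
      continuousAt_const
  filter_upwards [continuousAt_snd.eventually_lt (hcont hl) (hxp ▸ hD hl hx0 (by linarith)),
    (hcont (by linarith)).eventually_lt continuousAt_snd
      (hxp ▸ hD hx0 (show 0 < x + ε by linarith) (by linarith)),
    continuousAt_fst.eventually (lt_mem_nhds hk)] with q hql hqr hq
  obtain ⟨y, hy, hyq⟩ := intermediate_value_Icc' (by linarith : x - ε ≤ x + ε)
    ((continuousOn_assetDemand hf hs hq).mono fun y hy => hl.trans_le hy.1) ⟨hqr.le, hql.le⟩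
  exact ⟨y, isGsol_iff.2 ⟨hl.trans_le hy.1, hyq⟩, abs_le.2 ⟨by linarith [hy.1], by linarith [hy.2]⟩⟩

open Classical in
def nextCapital (G : ℝ) (f f' : ℝ → ℝ) (s : ℝ → ℝ → ℝ) (k p : ℝ) : ℝ :=
  if h : ∃ x, IsGsol G f f' s k p x then h.choose else 0

lemma isGsol_nextCapital (h : ∃ x, IsGsol G f f' s k p x) :
    IsGsol G f f' s k p (nextCapital G f f' s k p) := by
  rw [nextCapital, dif_pos h]
  exact h.choose_spec

lemma continuousAt_nextCapital (hf : ProdAssump G f f' f'') (hs : SavAssump s) (hk : 0 < k)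
    (h : ∃ x, IsGsol G f f' s k p x) :
    ContinuousAt (fun q : ℝ × ℝ => nextCapital G f f' s q.1 q.2) (k, p) := by
  have hx := isGsol_nextCapital h
  set x := nextCapital G f f' s k p
  rw [ContinuousAt, Metric.tendsto_nhds]
  intro ε hε
  have hδ : 0 < min (ε / 2) (x / 2) := lt_min (half_pos hε) (half_pos hx.1)
  filter_upwards [hx.eventually_exists_near hf hs hk hδ
      ((min_le_right _ _).trans_lt (half_lt_self hx.1)),
    continuousAt_fst.eventually (lt_mem_nhds hk)] with q ⟨y, hy, hyx⟩ hq
  rw [(isGsol_nextCapital ⟨y, hy⟩).unique hf hs hq hy, Real.dist_eq]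
  linarith [min_le_left (ε / 2) (x / 2)]

end Solution

section Paths

variable {G : ℝ} {f f' f'' : ℝ → ℝ} {s : ℝ → ℝ → ℝ} {d : ℕ → ℝ} {k p k' p' : ℕ → ℝ} {T : ℕ}

def SolvesUpTo (G : ℝ) (f f' : ℝ → ℝ) (s : ℝ → ℝ → ℝ) (d : ℕ → ℝ) (k p : ℕ → ℝ) (T : ℕ) :
    Prop :=
  ∀ t < T, IsGsol G f f' s (k t) (p t) (k (t + 1)) ∧
    p (t + 1) = f' (k (t + 1)) / G * p t - d (t + 1)

/-- The detrended discount factor `Γ_t = G^t q_t = G^t / (R_1 ⋯ R_t)`. -/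
def discount (G : ℝ) (f' : ℝ → ℝ) (k : ℕ → ℝ) (t : ℕ) : ℝ :=
  ∏ i ∈ Finset.range t, G / f' (k (i + 1))

lemma discount_succ (t : ℕ) :
    discount G f' k (t + 1) = discount G f' k t * (G / f' (k (t + 1))) :=
  Finset.prod_range_succ _ _

lemma discount_pos (hf : ProdAssump G f f' f'') {t : ℕ} (hk : ∀ i < t, 0 < k (i + 1)) :
    0 < discount G f' k t :=
  Finset.prod_pos fun i hi => div_pos hf.G_pos (hf.f'_pos (hk i (Finset.mem_range.1 hi)))

lemma discount_eq_pow_mul_qseq (t : ℕ) : discount G f' k t = G ^ t * qseq f' k t := by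
  rw [discount, Finset.prod_div_distrib, Finset.prod_const, Finset.card_range, qseq,
    div_eq_mul_inv]

lemma SolvesUpTo.pos (h : SolvesUpTo G f f' s d k p T) (h0 : 0 < k 0) : ∀ t ≤ T, 0 < k t
  | 0, _ => h0
  | t + 1, ht => (h t ht).1.1

lemma SolvesUpTo.discount_mul_price (hf : ProdAssump G f f' f'') (h : SolvesUpTo G f f' s d k p T) :
    ∀ t ≤ T, discount G f' k t * p t =
      p 0 - ∑ i ∈ Finset.range t, discount G f' k (i + 1) * d (i + 1) := by
  intro t ht
  induction t with
  | zero => simp [discount]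
  | succ t ih =>
    obtain ⟨hsol, hrec⟩ := h t ht
    have hR := (hf.f'_pos hsol.1).ne'
    rw [Finset.sum_range_succ, ← sub_sub, ← ih (by omega), hrec, discount_succ]
    field_simp [hf.G_pos.ne']

lemma SolvesUpTo.compare (hf : ProdAssump G f f' f'') (hs : SavAssump s)
    (h : SolvesUpTo G f f' s d k p T) (h' : SolvesUpTo G f f' s d k' p' T) (hk0 : k' 0 = k 0)
    (h0 : 0 < k 0) (hp0 : p 0 ≤ p' 0) (hp : ∀ t < T, 0 ≤ p t) :
    ∀ t ≤ T, k' t ≤ k t ∧ p' 0 - p 0 ≤ discount G f' k t * (p' t - p t) := by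
  intro t ht
  induction t with
  | zero => simp [discount, hk0]
  | succ t ih =>
    obtain ⟨hk, hgap⟩ := ih (by omega)
    obtain ⟨hsol, hrec⟩ := h t ht
    obtain ⟨hsol', hrec'⟩ := h' t ht
    have hΓ := discount_pos hf (t := t) fun i hi => (h i (by omega)).1.1
    have hpp' : p t ≤ p' t := by nlinarith
    have hkk' := hsol'.le_of_le_of_le hf hs (h'.pos (hk0 ▸ h0) t (by omega)) hk hpp' hsol
    refine ⟨hkk', ?_⟩
    rw [discount_succ]
    set R := f' (k (t + 1))
    set R' := f' (k' (t + 1))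
    have hR : 0 < R := hf.f'_pos hsol.1
    have hgrowth : discount G f' k t * (G / R) * (p' (t + 1) - p (t + 1)) =
        discount G f' k t * (p' t - p t) + discount G f' k t * ((R' - R) / R * p' t) := by
      rw [hrec, hrec']
      field_simp [hf.G_pos.ne']
      ring
    have : 0 ≤ discount G f' k t * ((R' - R) / R * p' t) :=
      mul_nonneg hΓ.le (mul_nonneg (div_nonneg (sub_nonneg.2 (hf.f'_le_of_le hsol'.1 hkk')) hR.le)
        (by linarith [hp t ht]))
    linarith

lemma SolvesUpTo.price_le (hf : ProdAssump G f f' f'') (hs : SavAssump s)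
    (h : SolvesUpTo G f f' s d k p T) (h' : SolvesUpTo G f f' s d k' p' T) (hk0 : k' 0 = k 0)
    (h0 : 0 < k 0) (hp0 : p 0 ≤ p' 0) (hp : ∀ t < T, 0 ≤ p t) : ∀ t ≤ T, p t ≤ p' t := by
  intro t ht
  have hΓ := discount_pos hf (t := t) fun i hi => h.pos h0 (i + 1) (by omega)
  nlinarith [(h.compare hf hs h' hk0 h0 hp0 hp t ht).2]

def IsCapitalBound (G : ℝ) (f f' : ℝ → ℝ) (s : ℝ → ℝ → ℝ) (K : ℝ) : Prop :=
  ∀ k p x, 0 < k → k ≤ K → 0 ≤ p → IsGsol G f f' s k p x → x ≤ K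

lemma exists_isCapitalBound (hf : ProdAssump G f f' f'') (hs : SavAssump s) (a : ℝ) :
    ∃ K, a ≤ K ∧ IsCapitalBound G f f' s K := by
  obtain ⟨L, hLG, hL⟩ := hf.2.2.2.2.2.2.2.2
  obtain ⟨K₀, hK₀G, hK₀⟩ := ((hL.eventually (gt_mem_nhds hLG)).and (eventually_gt_atTop 0)).exists
  -- `G x < f k`, and `f` lies below its tangent at `K₀`, whose slope is `< G`
  have hslope : 0 < G - f' K₀ := by linarith
  refine ⟨max a (f K₀ / (G - f' K₀)), le_max_left _ _, fun k p x hk hkK hp hx => ?_⟩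
  have hK := (div_le_iff₀ hslope).1 (le_max_right a (f K₀ / (G - f' K₀)))
  have hxk := hx.add_lt_wage hf hs hk
  have htan := hf.le_tangent hK₀ hk
  have := mul_pos hk (hf.f'_pos hk)
  have := mul_le_mul_of_nonneg_left hkK (hf.f'_pos hK₀).le
  have := mul_pos hK₀ (hf.f'_pos hK₀)
  simp only [wage] at hxk
  nlinarith [hf.G_pos]

lemma SolvesUpTo.le_of_isCapitalBound (h : SolvesUpTo G f f' s d k p T) {K : ℝ}
    (hK : IsCapitalBound G f f' s K) (h0 : 0 < k 0) (h0K : k 0 ≤ K) (hp : ∀ t < T, 0 ≤ p t) :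
    ∀ t ≤ T, k t ≤ K
  | 0, _ => h0K
  | t + 1, ht =>
    hK _ _ _ (h.pos h0 t (by omega)) (h.le_of_isCapitalBound hK h0 h0K hp t (by omega))
      (hp t ht) (h t ht).1

lemma SolvesUpTo.price_lt_wage (hf : ProdAssump G f f' f'') (hs : SavAssump s)
    (h : SolvesUpTo G f f' s d k p T) {K : ℝ} (hK : IsCapitalBound G f f' s K) (h0 : 0 < k 0)
    (h0K : k 0 ≤ K) (hp : ∀ t < T, 0 ≤ p t) : ∀ t < T, p t < wage f f' K := by
  intro t ht
  have hkt := h.pos h0 t ht.le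
  have := (h t ht).1.add_lt_wage hf hs hkt
  have := hf.wage_le_of_le hkt (h.le_of_isCapitalBound hK h0 h0K hp t ht.le)
  nlinarith [mul_pos hf.G_pos (h t ht).1.1]

end Paths

section Equilibria

variable {G : ℝ} {f f' f'' : ℝ → ℝ} {s : ℝ → ℝ → ℝ} {k0 : ℝ} {d : ℕ → ℝ} {k p k' p' : ℕ → ℝ}

lemma IsEquilibrium.isGsol (he : IsEquilibrium G f f' s k0 d k p) (t : ℕ) :
    IsGsol G f f' s (k t) (p t) (k (t + 1)) :=
  ⟨he.1 (t + 1), he.2.2.2.1 t⟩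

lemma IsEquilibrium.solvesUpTo (he : IsEquilibrium G f f' s k0 d k p) (T : ℕ) :
    SolvesUpTo G f f' s d k p T :=
  fun t _ => ⟨he.isGsol t, he.2.2.2.2 t⟩

lemma IsEquilibrium.exists_price_bound (hf : ProdAssump G f f' f'') (hs : SavAssump s)
    (he : IsEquilibrium G f f' s k0 d k p) : ∃ B, ∀ t, p t < B := by
  obtain ⟨K, hk0K, hK⟩ := exists_isCapitalBound hf hs k0
  exact ⟨wage f f' K, fun t => (he.solvesUpTo (t + 1)).price_lt_wage hf hs hK (he.1 0)
    (he.2.2.1 ▸ hk0K) (fun t _ => he.2.1 t) t (Nat.lt_succ_self t)⟩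

lemma IsEquilibrium.discount_pos (hf : ProdAssump G f f' f'') (he : IsEquilibrium G f f' s k0 d k p)
    (t : ℕ) : 0 < discount G f' k t :=
  _root_.discount_pos hf fun i _ => he.1 (i + 1)

lemma IsEquilibrium.discount_mul_price (hf : ProdAssump G f f' f'')
    (he : IsEquilibrium G f f' s k0 d k p) (t : ℕ) :
    discount G f' k t * p t = p 0 - ∑ i ∈ Finset.range t, discount G f' k (i + 1) * d (i + 1) :=
  (he.solvesUpTo t).discount_mul_price hf t le_rfl

lemma IsEquilibrium.sum_discount_mul_dividend_le (hf : ProdAssump G f f' f'')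
    (he : IsEquilibrium G f f' s k0 d k p) (t : ℕ) :
    ∑ i ∈ Finset.range t, discount G f' k (i + 1) * d (i + 1) ≤ p 0 := by
  linarith [he.discount_mul_price hf t, mul_nonneg (he.discount_pos hf t).le (he.2.1 t)]

lemma IsEquilibrium.summable_discount_mul_dividend (hf : ProdAssump G f f' f'')
    (he : IsEquilibrium G f f' s k0 d k p) (hd : ∀ t ≥ 1, 0 ≤ d t) :
    Summable fun i => discount G f' k (i + 1) * d (i + 1) :=
  summable_of_sum_range_le (fun i => mul_nonneg (he.discount_pos hf _).le (hd _ (by omega)))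
    (he.sum_discount_mul_dividend_le hf)

/-- If `Γ_t ≥ c` for all `t`, then `∑ d_t ≤ ∑ Γ_t d_t / c < ∞`. -/
lemma IsEquilibrium.exists_discount_lt (hf : ProdAssump G f f' f'')
    (he : IsEquilibrium G f f' s k0 d k p) (hd : ∀ t ≥ 1, 0 ≤ d t)
    (hcond : ¬ Summable (fun t => d (t + 1)) ∨ Tendsto (discount G f' k) atTop (𝓝 0))
    {c : ℝ} (hc : 0 < c) : ∃ t, discount G f' k t < c := by
  by_contra! hle
  rcases hcond with hdiv | hlim
  · refine hdiv (.of_nonneg_of_le (fun i => hd _ (by omega)) (fun i => ?_)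
      ((he.summable_discount_mul_dividend hf hd).mul_left c⁻¹))
    rw [le_inv_mul_iff₀ hc]
    exact mul_le_mul_of_nonneg_right (hle _) (hd _ (by omega))
  · exact hc.not_ge (ge_of_tendsto' hlim hle)

/-- Since `Γ_t p_t ≥ p_0 - ∑ Γ_t d_t` and prices are bounded, a bubble would keep `Γ_t` away
from `0`. -/
lemma IsEquilibrium.price_zero_eq_tsum (hf : ProdAssump G f f' f'') (hs : SavAssump s)
    (he : IsEquilibrium G f f' s k0 d k p) (hd : ∀ t ≥ 1, 0 ≤ d t)
    (hcond : ¬ Summable (fun t => d (t + 1)) ∨ Tendsto (discount G f' k) atTop (𝓝 0)) :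
    p 0 = ∑' i, discount G f' k (i + 1) * d (i + 1) := by
  have hsum := he.summable_discount_mul_dividend hf hd
  refine le_antisymm (not_lt.1 fun hlt => ?_) (Real.tsum_le_of_sum_range_le
    (fun i => mul_nonneg (he.discount_pos hf _).le (hd _ (by omega)))
    (he.sum_discount_mul_dividend_le hf))
  obtain ⟨B, hB⟩ := he.exists_price_bound hf hs
  have hB0 : 0 < B := (he.2.1 0).trans_lt (hB 0)
  obtain ⟨t, ht⟩ := he.exists_discount_lt hf hd hcond (div_pos (sub_pos.2 hlt) hB0)
  rw [lt_div_iff₀ hB0] at ht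
  have := he.discount_mul_price hf t
  have := hsum.sum_le_tsum (Finset.range t)
    fun i _ => mul_nonneg (he.discount_pos hf _).le (hd _ (by omega))
  have := mul_le_mul_of_nonneg_left (hB t).le (he.discount_pos hf t).le
  linarith

lemma IsEquilibrium.bubbleless_of_price_zero_eq_tsum (hf : ProdAssump G f f' f'')
    (he : IsEquilibrium G f f' s k0 d k p) (hd : ∀ t ≥ 1, 0 ≤ d t)
    (h0 : p 0 = ∑' i, discount G f' k (i + 1) * d (i + 1)) : Bubbleless G f' k p d := by
  intro t
  have htail : ∑' n, qseq f' k (t + 1 + n) * Dseq G d (t + 1 + n) = discount G f' k t * p t := by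
    rw [he.discount_mul_price hf t, h0,
      ← (he.summable_discount_mul_dividend hf hd).sum_add_tsum_nat_add t, add_sub_cancel_left]
    refine tsum_congr fun n => ?_
    rw [show t + 1 + n = n + t + 1 by omega, Dseq, discount_eq_pow_mul_qseq]
    ring
  rw [bubble, fundval, htail, ← mul_inv, ← discount_eq_pow_mul_qseq,
    inv_mul_cancel_left₀ (he.discount_pos hf t).ne', sub_self]

lemma IsEquilibrium.bubbleless (hf : ProdAssump G f f' f'') (hs : SavAssump s)
    (he : IsEquilibrium G f f' s k0 d k p) (hd : ∀ t ≥ 1, 0 ≤ d t)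
    (hcond : ¬ Summable (fun t => d (t + 1)) ∨ Tendsto (discount G f' k) atTop (𝓝 0)) :
    Bubbleless G f' k p d :=
  he.bubbleless_of_price_zero_eq_tsum hf hd (he.price_zero_eq_tsum hf hs hd hcond)

/-- A higher initial price `p' 0 > p 0` would give `Γ_t (p'_t - p_t) ≥ p' 0 - p 0` with bounded
`p'_t`, keeping `Γ_t` away from `0`. -/
lemma IsEquilibrium.price_zero_le (hf : ProdAssump G f f' f'') (hs : SavAssump s)
    (he' : IsEquilibrium G f f' s k0 d k' p') (he : IsEquilibrium G f f' s k0 d k p)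
    (hd : ∀ t ≥ 1, 0 ≤ d t)
    (hcond : ¬ Summable (fun t => d (t + 1)) ∨ Tendsto (discount G f' k) atTop (𝓝 0)) :
    p' 0 ≤ p 0 := by
  by_contra! hlt
  obtain ⟨B, hB⟩ := he'.exists_price_bound hf hs
  have hB0 : 0 < B := (he'.2.1 0).trans_lt (hB 0)
  obtain ⟨t, ht⟩ := he.exists_discount_lt hf hd hcond (div_pos (sub_pos.2 hlt) hB0)
  rw [lt_div_iff₀ hB0] at ht
  have := ((he.solvesUpTo t).compare hf hs (he'.solvesUpTo t) (he'.2.2.1.trans he.2.2.1.symm)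
    (he.1 0) hlt.le (fun t _ => he.2.1 t) t le_rfl).2
  have := mul_le_mul_of_nonneg_left (show p' t - p t ≤ B by linarith [hB t, he.2.1 t])
    (he.discount_pos hf t).le
  linarith

lemma IsEquilibrium.eq_of_price_zero_eq (hf : ProdAssump G f f' f'') (hs : SavAssump s)
    (he' : IsEquilibrium G f f' s k0 d k' p') (he : IsEquilibrium G f f' s k0 d k p)
    (h0 : p' 0 = p 0) : ∀ t, k' t = k t ∧ p' t = p t
  | 0 => ⟨he'.2.2.1.trans he.2.2.1.symm, h0⟩
  | t + 1 => by
    obtain ⟨hk, hp⟩ := he'.eq_of_price_zero_eq hf hs he h0 t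
    have hsol := he'.isGsol t
    rw [hk, hp] at hsol
    have hk1 := hsol.unique hf hs (he.1 t) (he.isGsol t)
    exact ⟨hk1, by rw [he'.2.2.2.2, he.2.2.2.2, hk1, hp]⟩

lemma IsEquilibrium.capital_le (hf : ProdAssump G f f' f'') (hs : SavAssump s)
    (he : IsEquilibrium G f f' s k0 d k p) {kstar : ℕ → ℝ} (hks0 : kstar 0 = k0)
    (hks : ∀ t, IsGsol G f f' s (kstar t) 0 (kstar (t + 1))) : ∀ t, k t ≤ kstar t
  | 0 => (he.2.2.1.trans hks0.symm).le
  | t + 1 => (he.isGsol t).le_of_le_of_le hf hs (he.1 t) (he.capital_le hf hs hks0 hks t)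
      (he.2.1 t) (hks t)

lemma tendsto_discount_zero (hf : ProdAssump G f f' f'') (hk : ∀ t, 0 < k t) {ρ : ℝ}
    (hρ : G < ρ) (h : ∀ᶠ t in atTop, ρ ≤ f' (k t)) : Tendsto (discount G f' k) atTop (𝓝 0) := by
  have hG := hf.G_pos
  refine (summable_of_ratio_norm_eventually_le ((div_lt_one (hG.trans hρ)).2 hρ)
    ?_).tendsto_atTop_zero
  filter_upwards [(tendsto_add_atTop_nat 1).eventually h] with t ht
  have hΓ := discount_pos hf (t := t) fun i _ => hk _
  rw [discount_succ, Real.norm_of_nonneg hΓ.le,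
    Real.norm_of_nonneg (mul_pos hΓ (div_pos hG (hf.f'_pos (hk _)))).le, mul_comm]
  exact mul_le_mul_of_nonneg_right (div_le_div_of_nonneg_left hG.le (hG.trans hρ) ht) hΓ.le

lemma ProdAssump.exists_lt_eventually_le (hf : ProdAssump G f f' f'') {u : ℕ → ℝ}
    (hu : ∀ t, 0 < u t) {l : ℝ} (hul : Tendsto u atTop (𝓝 l)) (hl : l = 0 ∨ 0 < l ∧ G < f' l) :
    ∃ ρ, G < ρ ∧ ∀ᶠ t in atTop, ρ ≤ f' (u t) := by
  rcases hl with rfl | ⟨hl, hGl⟩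
  · exact ⟨G + 1, lt_add_one G, (hf.tendsto_f'_zero.comp
      (tendsto_nhdsWithin_iff.2 ⟨hul, .of_forall hu⟩)).eventually_ge_atTop _⟩
  · exact ⟨(G + f' l) / 2, by linarith,
      ((hf.continuousAt_f' hl).tendsto.comp hul).eventually (le_mem_nhds (by linarith))⟩

end Equilibria

section Existence

variable {G : ℝ} {f f' f'' : ℝ → ℝ} {s : ℝ → ℝ → ℝ} {k0 : ℝ} {d : ℕ → ℝ} {p0 c : ℝ} {T : ℕ}

/-- The bound on `f'(x_j) p_j` rules out `x_j → 0` when `p > 0`; otherwise a limit point of the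
bounded `x_j` solves the limit equation. -/
lemma exists_isGsol_of_tendsto (hf : ProdAssump G f f' f'') (hs : SavAssump s) {k p : ℝ}
    (hk : 0 < k) {kj pj xj : ℕ → ℝ} (hkj : Tendsto kj atTop (𝓝 k)) (hpj : Tendsto pj atTop (𝓝 p))
    (hx : ∀ j, IsGsol G f f' s (kj j) (pj j) (xj j)) {B : ℝ} (hB : ∀ j, f' (xj j) * pj j ≤ B) :
    ∃ x, IsGsol G f f' s k p x := by
  rcases le_or_gt p 0 with hp | hp
  · exact exists_isGsol_of_nonpos hf hs hk hp
  have hbdd : ∀ᶠ j in atTop, xj j ∈ Icc 0 ((wage f f' k + 1) / G) := by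
    filter_upwards [hkj.eventually (lt_mem_nhds hk),
      ((hf.continuousAt_wage hk).tendsto.comp hkj).eventually (gt_mem_nhds (lt_add_one _)),
      hpj.eventually (lt_mem_nhds hp)] with j hkj' hwj hpj'
    have := (hx j).add_lt_wage hf hs hkj'
    exact ⟨(hx j).1.le, (le_div_iff₀ hf.G_pos).2 (by simp only [Function.comp] at hwj; linarith)⟩
  obtain ⟨a, ha, φ, hφ, hxa⟩ := isCompact_Icc.tendsto_subseq' hbdd.frequently
  have hφ' := hφ.tendsto_atTop
  rcases ha.1.eq_or_lt with rfl | ha0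
  · have := (hf.tendsto_f'_zero.comp (tendsto_nhdsWithin_iff.2
      ⟨hxa, .of_forall fun j => (hx _).1⟩)).atTop_mul_pos hp (hpj.comp hφ')
    obtain ⟨j, hj⟩ := (this.eventually_gt_atTop B).exists
    exact absurd (hB (φ j)) hj.not_ge
  · refine ⟨a, isGsol_iff.2 ⟨ha0, tendsto_nhds_unique ?_ (hpj.comp hφ')⟩⟩
    exact ((continuousAt_assetDemand hf hs hk ha0).tendsto.comp
      ((hkj.comp hφ').prodMk_nhds hxa)).congr fun j => (isGsol_iff.1 (hx (φ j))).2

def shootStep (G : ℝ) (f f' : ℝ → ℝ) (s : ℝ → ℝ → ℝ) (d : ℕ → ℝ) (t : ℕ) (q : ℝ × ℝ) :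
    ℝ × ℝ :=
  (nextCapital G f f' s q.1 q.2, f' (nextCapital G f f' s q.1 q.2) / G * q.2 - d (t + 1))

/-- `(k_t, p_t)` along the path that starts from the asset price `p0`. -/
def shoot (G : ℝ) (f f' : ℝ → ℝ) (s : ℝ → ℝ → ℝ) (k0 : ℝ) (d : ℕ → ℝ) (p0 : ℝ) : ℕ → ℝ × ℝ
  | 0 => (k0, p0)
  | t + 1 => shootStep G f f' s d t (shoot G f f' s k0 d p0 t)

def PathDefined (G : ℝ) (f f' : ℝ → ℝ) (s : ℝ → ℝ → ℝ) (k0 : ℝ) (d : ℕ → ℝ) (p0 : ℝ) (T : ℕ) :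
    Prop :=
  ∀ t < T, ∃ x, IsGsol G f f' s (shoot G f f' s k0 d p0 t).1 (shoot G f f' s k0 d p0 t).2 x

local notation "path" => shoot G f f' s k0 d

lemma pathDefined_succ : PathDefined G f f' s k0 d p0 (T + 1) ↔
    PathDefined G f f' s k0 d p0 T ∧ ∃ x, IsGsol G f f' s (path p0 T).1 (path p0 T).2 x := by
  refine ⟨fun h => ⟨fun t ht => h t (by omega), h T (by omega)⟩, fun ⟨h, hT⟩ t ht => ?_⟩
  rcases (Nat.lt_succ_iff.1 ht).lt_or_eq with ht | rfl
  exacts [h t ht, hT]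

lemma PathDefined.mono (h : PathDefined G f f' s k0 d p0 T) {S : ℕ} (hST : S ≤ T) :
    PathDefined G f f' s k0 d p0 S :=
  fun t ht => h t (by omega)

lemma PathDefined.solvesUpTo (h : PathDefined G f f' s k0 d p0 T) :
    SolvesUpTo G f f' s d (fun t => (path p0 t).1) (fun t => (path p0 t).2) T :=
  fun t ht => ⟨isGsol_nextCapital (h t ht), rfl⟩

lemma PathDefined.price_zero_lt (hf : ProdAssump G f f' f'') (hs : SavAssump s) (hk0 : 0 < k0)
    (h : PathDefined G f f' s k0 d p0 (T + 1)) : p0 < wage f f' k0 := by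
  have hx : IsGsol G f f' s k0 p0 _ := isGsol_nextCapital (h 0 T.succ_pos)
  nlinarith [hx.add_lt_wage hf hs hk0, mul_pos hf.G_pos hx.1]

lemma continuousAt_shootStep (hf : ProdAssump G f f' f'') (hs : SavAssump s) {q : ℝ × ℝ}
    (hq : 0 < q.1) (h : ∃ x, IsGsol G f f' s q.1 q.2 x) (t : ℕ) :
    ContinuousAt (shootStep G f f' s d t) q := by
  have hnext := continuousAt_nextCapital hf hs hq h
  have hR : ContinuousAt (fun q : ℝ × ℝ => f' (nextCapital G f f' s q.1 q.2)) q :=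
    ContinuousAt.comp (g := f') (hf.continuousAt_f' (isGsol_nextCapital h).1) hnext
  exact hnext.prodMk (((hR.div_const G).mul continuousAt_snd).sub continuousAt_const)

lemma PathDefined.continuousAt_shoot (hf : ProdAssump G f f' f'') (hs : SavAssump s)
    (hk0 : 0 < k0) (h : PathDefined G f f' s k0 d c T) :
    ∀ t ≤ T, ContinuousAt (fun q => path q t) c
  | 0, _ => continuousAt_const.prodMk continuousAt_id
  | t + 1, ht => ContinuousAt.comp (f := fun q => path q t)
      (continuousAt_shootStep hf hs (h.solvesUpTo.pos hk0 t (by omega)) (h t ht) t)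
      (h.continuousAt_shoot hf hs hk0 t (by omega))

lemma PathDefined.eventually (hf : ProdAssump G f f' f'') (hs : SavAssump s) (hk0 : 0 < k0)
    (h : PathDefined G f f' s k0 d c T) : ∀ᶠ q in 𝓝 c, PathDefined G f f' s k0 d q T := by
  induction T with
  | zero => exact .of_forall fun q t ht => absurd ht (Nat.not_lt_zero t)
  | succ T ih =>
    obtain ⟨hT, x, hx⟩ := pathDefined_succ.1 h
    filter_upwards [ih hT, (hT.continuousAt_shoot hf hs hk0 T le_rfl).tendsto.eventually
      (hx.eventually_exists_near hf hs (hT.solvesUpTo.pos hk0 T le_rfl) (half_pos hx.1)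
        (half_lt_self hx.1))] with q hq ⟨y, hy, _⟩
    exact pathDefined_succ.2 ⟨hq, y, hy⟩

lemma pathDefined_of_tendsto (hf : ProdAssump G f f' f'') (hs : SavAssump s) (hk0 : 0 < k0)
    {q : ℕ → ℝ} (hq : Tendsto q atTop (𝓝 c)) (hdef : ∀ j, PathDefined G f f' s k0 d (q j) T)
    {B : ℝ} (hB : ∀ j, ∀ t ≤ T, (path (q j) t).2 ≤ B) : PathDefined G f f' s k0 d c T := by
  induction T with
  | zero => exact fun t ht => absurd ht (Nat.not_lt_zero t)
  | succ T ih =>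
    have hc := ih (fun j => (hdef j).mono T.le_succ) fun j t ht => hB j t (by omega)
    have hcont := hc.continuousAt_shoot hf hs hk0 T le_rfl
    refine pathDefined_succ.2 ⟨hc, exists_isGsol_of_tendsto hf hs (hc.solvesUpTo.pos hk0 T le_rfl)
      (hcont.fst.tendsto.comp hq) (hcont.snd.tendsto.comp hq)
      (fun j => isGsol_nextCapital (hdef j T T.lt_succ_self)) (B := G * (B + d (T + 1)))
      fun j => ?_⟩
    have := hB j (T + 1) le_rfl
    change f' _ / G * (path (q j) T).2 - d (T + 1) ≤ B at this
    show f' (nextCapital G f f' s (path (q j) T).1 (path (q j) T).2) * (path (q j) T).2 ≤ _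
    rw [div_mul_eq_mul_div, sub_le_iff_le_add, div_le_iff₀ hf.G_pos] at this
    linarith

/-- `p0` starts an equilibrium of the economy that ends in period `T` with a worthless asset. -/
def IsTruncatedEquilibrium (G : ℝ) (f f' : ℝ → ℝ) (s : ℝ → ℝ → ℝ) (k0 : ℝ) (d : ℕ → ℝ) (p0 : ℝ)
    (T : ℕ) : Prop :=
  PathDefined G f f' s k0 d p0 T ∧ (∀ t ≤ T, 0 ≤ (shoot G f f' s k0 d p0 t).2) ∧
    (shoot G f f' s k0 d p0 T).2 = 0

lemma IsTruncatedEquilibrium.pathDefined_succ (hf : ProdAssump G f f' f'') (hs : SavAssump s)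
    (hk0 : 0 < k0) (h : IsTruncatedEquilibrium G f f' s k0 d p0 T) :
    PathDefined G f f' s k0 d p0 (T + 1) :=
  _root_.pathDefined_succ.2
    ⟨h.1, exists_isGsol_of_nonpos hf hs (h.1.solvesUpTo.pos hk0 T le_rfl) h.2.2.le⟩

lemma IsTruncatedEquilibrium.price_nonneg_of_le (hf : ProdAssump G f f' f'') (hs : SavAssump s)
    (hk0 : 0 < k0) (h : IsTruncatedEquilibrium G f f' s k0 d p0 T) {q : ℝ}
    (hq : PathDefined G f f' s k0 d q T) (hle : p0 ≤ q) : ∀ t ≤ T, 0 ≤ (path q t).2 :=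
  fun t ht => (h.2.1 t ht).trans (h.1.solvesUpTo.price_le hf hs hq.solvesUpTo rfl hk0 hle
    (fun t ht => h.2.1 t ht.le) t ht)

/-- Otherwise, at the supremum `c` of the prices up to which all paths are defined (with
`p_{T+1} < 0`), `pathDefined_of_tendsto` shows the path from `c` to be defined, and then so are the
paths from just above `c`. -/
lemma IsTruncatedEquilibrium.exists_price_succ_nonneg (hf : ProdAssump G f f' f'')
    (hs : SavAssump s) (hk0 : 0 < k0) (h : IsTruncatedEquilibrium G f f' s k0 d p0 T) :
    ∃ b, p0 ≤ b ∧ (∀ q ∈ Icc p0 b, PathDefined G f f' s k0 d q (T + 1)) ∧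
      0 ≤ (path b (T + 1)).2 := by
  by_contra! hneg
  set S := {b | p0 ≤ b ∧ ∀ q ∈ Icc p0 b, PathDefined G f f' s k0 d q (T + 1)}
  have hp0S : p0 ∈ S :=
    ⟨le_rfl, fun q hq => le_antisymm hq.2 hq.1 ▸ h.pathDefined_succ hf hs hk0⟩
  have hSbdd : BddAbove S :=
    ⟨wage f f' k0, fun b hb => ((hb.2 b ⟨hb.1, le_rfl⟩).price_zero_lt hf hs hk0).le⟩
  obtain ⟨K, hk0K, hK⟩ := exists_isCapitalBound hf hs k0
  obtain ⟨u, -, hu, huS⟩ := exists_seq_tendsto_sSup ⟨p0, hp0S⟩ hSbdd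
  have hdef : PathDefined G f f' s k0 d (sSup S) (T + 1) := by
    refine pathDefined_of_tendsto hf hs hk0 hu (fun j => (huS j).2 _ ⟨(huS j).1, le_rfl⟩)
      (B := wage f f' K) fun j t ht => ?_
    have hdefj := (huS j).2 _ ⟨(huS j).1, le_rfl⟩
    rcases ht.lt_or_eq with ht | rfl
    · exact (hdefj.solvesUpTo.price_lt_wage hf hs hK hk0 hk0K (fun t ht =>
        h.price_nonneg_of_le hf hs hk0 (hdefj.mono T.le_succ) (huS j).1 t (by omega)) t ht).le
    · exact (hneg _ (huS j).1 (huS j).2).le.trans (hf.wage_pos (hk0.trans_le hk0K)).le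
  obtain ⟨δ, hδ, hball⟩ := Metric.eventually_nhds_iff_ball.1 (hdef.eventually hf hs hk0)
  have hmem : sSup S + δ / 2 ∈ S := by
    refine ⟨(le_csSup hSbdd hp0S).trans (by linarith), fun q hq => ?_⟩
    rcases lt_or_ge q (sSup S) with hlt | hge
    · obtain ⟨b, hb, hqb⟩ := exists_lt_of_lt_csSup ⟨p0, hp0S⟩ hlt
      exact hb.2 q ⟨hq.1, hqb.le⟩
    · exact hball q (by rw [Metric.mem_ball, Real.dist_eq, abs_lt]; constructor <;> linarith [hq.2])
  linarith [le_csSup hSbdd hmem]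

lemma IsTruncatedEquilibrium.exists_succ (hf : ProdAssump G f f' f'') (hs : SavAssump s)
    (hk0 : 0 < k0) (hd : ∀ t ≥ 1, 0 ≤ d t) (h : IsTruncatedEquilibrium G f f' s k0 d p0 T) :
    ∃ p1, IsTruncatedEquilibrium G f f' s k0 d p1 (T + 1) := by
  obtain ⟨b, hb, hdef, hpb⟩ := h.exists_price_succ_nonneg hf hs hk0
  have hcont : ContinuousOn (fun q => (path q (T + 1)).2) (Icc p0 b) := fun q hq =>
    ((hdef q hq).continuousAt_shoot hf hs hk0 (T + 1) le_rfl).snd.continuousWithinAt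
  have hp0 : (path p0 (T + 1)).2 ≤ 0 := by
    change f' _ / G * (path p0 T).2 - d (T + 1) ≤ 0
    rw [h.2.2, mul_zero, zero_sub, neg_nonpos]
    exact hd _ (Nat.le_add_left 1 T)
  obtain ⟨p1, hp1, hzero⟩ := intermediate_value_Icc hb hcont ⟨hp0, hpb⟩
  refine ⟨p1, hdef p1 hp1, fun t ht => ?_, hzero⟩
  rcases ht.lt_or_eq with ht | rfl
  · exact h.price_nonneg_of_le hf hs hk0 ((hdef p1 hp1).mono T.le_succ) hp1.1 t (by omega)
  · exact hzero.ge

lemma exists_isTruncatedEquilibrium (hf : ProdAssump G f f' f'') (hs : SavAssump s)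
    (hk0 : 0 < k0) (hd : ∀ t ≥ 1, 0 ≤ d t) : ∀ T, ∃ p0, IsTruncatedEquilibrium G f f' s k0 d p0 T
  | 0 => ⟨0, fun t ht => absurd ht (Nat.not_lt_zero t),
      fun t ht => by rw [Nat.le_zero.1 ht]; exact le_rfl, rfl⟩
  | T + 1 =>
    let ⟨_, h⟩ := exists_isTruncatedEquilibrium hf hs hk0 hd T
    h.exists_succ hf hs hk0 hd

def IsViable (G : ℝ) (f f' : ℝ → ℝ) (s : ℝ → ℝ → ℝ) (k0 : ℝ) (d : ℕ → ℝ) (p0 : ℝ) (T : ℕ) :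
    Prop :=
  PathDefined G f f' s k0 d p0 (T + 1) ∧ ∀ t ≤ T, 0 ≤ (shoot G f f' s k0 d p0 t).2

lemma IsViable.mono (h : IsViable G f f' s k0 d p0 (T + 1)) : IsViable G f f' s k0 d p0 T :=
  ⟨h.1.mono T.succ.le_succ, fun t ht => h.2 t (by omega)⟩

lemma IsViable.mem_Icc (hf : ProdAssump G f f' f'') (hs : SavAssump s) (hk0 : 0 < k0)
    (h : IsViable G f f' s k0 d p0 T) : p0 ∈ Icc 0 (wage f f' k0) :=
  ⟨h.2 0 T.zero_le, (h.1.price_zero_lt hf hs hk0).le⟩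

lemma IsTruncatedEquilibrium.isViable (hf : ProdAssump G f f' f'') (hs : SavAssump s)
    (hk0 : 0 < k0) (h : IsTruncatedEquilibrium G f f' s k0 d p0 T) :
    IsViable G f f' s k0 d p0 T :=
  ⟨h.pathDefined_succ hf hs hk0, h.2.1⟩

lemma IsViable.of_mem_closure (hf : ProdAssump G f f' f'') (hs : SavAssump s) (hk0 : 0 < k0)
    (hc : c ∈ closure {q | IsViable G f f' s k0 d q (T + 1)}) : IsViable G f f' s k0 d c T := by
  obtain ⟨q, hqV, hq⟩ := mem_closure_iff_seq_limit.1 hc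
  obtain ⟨K, hk0K, hK⟩ := exists_isCapitalBound hf hs k0
  have hdef : PathDefined G f f' s k0 d c (T + 1) :=
    pathDefined_of_tendsto hf hs hk0 hq (fun j => (hqV j).1.mono T.succ.le_succ)
      (B := wage f f' K) fun j t ht => ((hqV j).1.solvesUpTo.price_lt_wage hf hs hK hk0 hk0K
        (fun t ht => (hqV j).2 t (by omega)) t (by omega)).le
  exact ⟨hdef, fun t ht => ge_of_tendsto'
    ((hdef.continuousAt_shoot hf hs hk0 t (by omega)).snd.tendsto.comp hq)
    fun j => (hqV j).2 t (by omega)⟩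

theorem exists_equilibrium (hf : ProdAssump G f f' f'') (hs : SavAssump s) (hk0 : 0 < k0)
    (hd : ∀ t ≥ 1, 0 ≤ d t) : ∃ k p, IsEquilibrium G f f' s k0 d k p := by
  obtain ⟨c, hc⟩ := IsCompact.nonempty_iInter_of_sequence_nonempty_isCompact_isClosed
    (fun T => closure {q | IsViable G f f' s k0 d q T})
    (fun T => closure_mono fun q hq => hq.mono)
    (fun T => (exists_isTruncatedEquilibrium hf hs hk0 hd T).imp
      fun q hq => subset_closure (hq.isViable hf hs hk0))
    (isCompact_Icc.of_isClosed_subset isClosed_closure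
      (closure_minimal (fun q hq => hq.mem_Icc hf hs hk0) isClosed_Icc))
    fun T => isClosed_closure
  have hV : ∀ T, IsViable G f f' s k0 d c T :=
    fun T => IsViable.of_mem_closure hf hs hk0 (mem_iInter.1 hc (T + 1))
  exact ⟨fun t => (path c t).1, fun t => (path c t).2,
    fun t => (hV t).1.solvesUpTo.pos hk0 t (by omega), fun t => (hV t).2 t le_rfl, rfl,
    fun t => ((hV t).1.solvesUpTo t (by omega)).1.2, fun t => rfl⟩

end Existence

theorem stmt10_general (G : ℝ) (f f' f'' : ℝ → ℝ) (s : ℝ → ℝ → ℝ)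
    (hf : ProdAssump G f f' f'') (hs : SavAssump s)
    (k0 : ℝ) (hk0 : 0 < k0) (d : ℕ → ℝ) (hd : ∀ t ≥ 1, 0 ≤ d t)
    (kstar : ℕ → ℝ) (hks0 : kstar 0 = k0)
    (hks : ∀ t, IsGsol G f f' s (kstar t) 0 (kstar (t + 1)))
    (klim : ℝ) (hklim : Tendsto kstar atTop (nhds klim))
    (hcond : (¬ Summable (fun t : ℕ => d (t + 1))) ∨
      klim = 0 ∨ (0 < klim ∧ G < f' klim)) :
    ∃ k p : ℕ → ℝ,
      (IsEquilibrium G f f' s k0 d k p ∧ Bubbleless G f' k p d) ∧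
      ∀ k' p' : ℕ → ℝ, IsEquilibrium G f f' s k0 d k' p' →
        (∀ t, k' t = k t) ∧ (∀ t, p' t = p t) := by
  have hkstar : ∀ t, 0 < kstar t
    | 0 => hks0 ▸ hk0
    | t + 1 => (hks t).1
  -- every equilibrium has `k_t ≤ k*_t`, hence `R_t ≥ f'(k*_t)`
  have hdisc : ∀ k p, IsEquilibrium G f f' s k0 d k p →
      ¬ Summable (fun t => d (t + 1)) ∨ Tendsto (discount G f' k) atTop (𝓝 0) := by
    refine fun k p he => hcond.imp_right fun hlim => ?_
    obtain ⟨ρ, hρ, hev⟩ := hf.exists_lt_eventually_le hkstar hklim hlim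
    exact tendsto_discount_zero hf he.1 hρ <| hev.mono fun t ht =>
      ht.trans (hf.f'_le_of_le (he.1 t) (he.capital_le hf hs hks0 hks t))
  obtain ⟨k, p, he⟩ := exists_equilibrium hf hs hk0 hd
  refine ⟨k, p, ⟨he, he.bubbleless hf hs hd (hdisc k p he)⟩, fun k' p' he' => ?_⟩
  have h0 : p' 0 = p 0 := le_antisymm (he'.price_zero_le hf hs he hd (hdisc k p he))
    (he.price_zero_le hf hs he' hd (hdisc k' p' he'))
  exact ⟨fun t => (he'.eq_of_price_zero_eq hf hs he h0 t).1,
    fun t => (he'.eq_of_price_zero_eq hf hs he h0 t).2⟩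

/-- Corollary `cor:bubbleless2`: with `k*` the limit of the
Diamond sequence and `R* = f'(k*)` (read as `∞` when `k* = 0`), if either
`∑ d_t = ∞` or `R* > G`, then there exists exactly one equilibrium and it is
bubbleless. -/
theorem stmt10 (G : ℝ) (f f' f'' : ℝ → ℝ) (s : ℝ → ℝ → ℝ)
    (hf : ProdAssump G f f' f'') (hs : SavAssump s) (hsU : SavFromUtility s)
    (k0 : ℝ) (hk0 : 0 < k0) (d : ℕ → ℝ) (hd : ∀ t ≥ 1, 0 ≤ d t)
    (kstar : ℕ → ℝ) (hks0 : kstar 0 = k0)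
    (hks : ∀ t, IsGsol G f f' s (kstar t) 0 (kstar (t + 1)))
    (klim : ℝ) (hklim : Tendsto kstar atTop (nhds klim))
    (hcond : (¬ Summable (fun t : ℕ => d (t + 1))) ∨
      klim = 0 ∨ (0 < klim ∧ G < f' klim)) :
    ∃ k p : ℕ → ℝ,
      (IsEquilibrium G f f' s k0 d k p ∧ Bubbleless G f' k p d) ∧
      ∀ k' p' : ℕ → ℝ, IsEquilibrium G f f' s k0 d k' p' →
        (∀ t, k' t = k t) ∧ (∀ t, p' t = p t) :=
  stmt10_general G f f' f'' s hf hs k0 hk0 d hd kstar hks0 hks klim hklim hcond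

end
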